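/- Let n ≥ 6 and let 𝔤 be an n-dimensional non-model complex filiform Lie algebra with associated triple (n−2,n−2,n). Then dim[C²𝔤,C²𝔤] = dim[C²𝔤,C³𝔤] = dim[C³𝔤,C²𝔤] = 1, and [C^k𝔤,C^ℓ𝔤] = 0 for all integers k,ℓ ≥ 2 with (k,ℓ) ∉ {(2,2),(2,3),(3,2)} (equivalently, the Hilbert polynomial of 𝔤 is HP⁰_𝔤 + t²s³ + t³s² + t²s², where HP⁰_𝔤 = (n−2)ts + Σ_{2≤k≤n−2}(n−k−1)(t^k s + t s^k)). -/

import Mathlib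

open Module

variable (L : Type) [LieRing L] [LieAlgebra ℂ L]

/-- `C L k` is the `k`-th term of the lower central series of `L`,
with the convention `C L 1 = L`. -/
def C (k : ℕ) : LieIdeal ℂ L := LieModule.lowerCentralSeries ℂ L L (k - 1)

/-- `L` is a filiform Lie algebra of dimension `n`. -/
def IsFiliform (n : ℕ) : Prop :=
  2 ≤ n ∧ FiniteDimensional ℂ L ∧ finrank ℂ L = n ∧
    ∀ k, 2 ≤ k → k ≤ n → finrank ℂ (C L k) = n - k

/-- `e 1, …, e n` is an adapted basis of `L`. -/
def IsAdaptedBasis (n : ℕ) (e : ℕ → L) : Prop :=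
  (∃ b : Basis (Fin n) ℂ L, ∀ i : Fin n, b i = e (i.1 + 1)) ∧
  (∀ h, 3 ≤ h → h ≤ n → ⁅e 1, e h⁆ = e (h - 1)) ∧
  (∀ h, 1 ≤ h → h ≤ n → ⁅e 2, e h⁆ = 0) ∧
  (∀ h, 2 ≤ h → h ≤ n → ⁅e 3, e h⁆ = 0)

/-- `L` is (isomorphic to) the model filiform Lie algebra of dimension `n`,
i.e. it admits a basis whose only nonzero brackets are `⁅e 1, e h⁆ = e (h-1)`. -/
def IsModel (n : ℕ) : Prop :=
  ∃ e : ℕ → L,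
    (∃ b : Basis (Fin n) ℂ L, ∀ i : Fin n, b i = e (i.1 + 1)) ∧
    (∀ h, 3 ≤ h → h ≤ n → ⁅e 1, e h⁆ = e (h - 1)) ∧
    ⁅e 1, e 2⁆ = 0 ∧
    (∀ i j, 2 ≤ i → i < j → j ≤ n → ⁅e i, e j⁆ = 0)

/-- `L` is a non-model filiform Lie algebra with associated triple `(z₁, z₂, n)`. -/
def HasTriple (z₁ z₂ n : ℕ) : Prop :=
  IsFiliform L n ∧ ¬ IsModel L n ∧
  ∀ e : ℕ → L, IsAdaptedBasis L n e →
    IsLeast {k | 4 ≤ k ∧ ⁅e k, e n⁆ ≠ 0} z₁ ∧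
    IsLeast {k | 4 ≤ k ∧ ⁅e k, e (k + 1)⁆ ≠ 0} z₂

/-- `θ_k(L)`: the least `ℓ ≥ 1` with `⁅C^k L, C^ℓ L⁆ = 0`. -/
noncomputable def theta (k : ℕ) : ℕ := sInf {ℓ | 1 ≤ ℓ ∧ ⁅C L k, C L ℓ⁆ = ⊥}

/-- `P h u` is the `h`-th coordinate of `u` in the basis `e 1, …, e n` (and `0` for
`h` outside `{1, …, n}`). -/
def IsCoords (n : ℕ) (e : ℕ → L) (P : ℕ → L → ℂ) : Prop :=
  (∀ u : L, u = ∑ h ∈ Finset.Icc 1 n, P h u • e h) ∧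
  (∀ u : L, ∀ h, h ∉ Finset.Icc 1 n → P h u = 0)

/-- `(α, γ, β)` is a family of parameters associated with `L` (with triple `(z₁, z₂, n)`)
with respect to the adapted basis `e` with coordinate functions `P`. -/
def IsAssocParams (z₁ z₂ n : ℕ) (e : ℕ → L) (P : ℕ → L → ℂ)
    (α γ : ℕ → ℂ) (β : ℕ → ℕ → ℂ) : Prop :=
  (∀ i, i ≤ z₂ - z₁ →
    ⁅e (z₁ + i), e (z₂ + 1)⁆ = ∑ m ∈ Finset.Icc 1 (i + 1), α m • e (i + 3 - m)) ∧
  (∀ j, 2 ≤ j → j ≤ n - z₂ →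
    ⁅e z₁, e (z₂ + j)⁆ =
      α 1 • e (j + 1) + ∑ m ∈ Finset.Icc 1 (j - 1), γ m • e (j + 1 - m)) ∧
  (∀ k ℓ, 2 ≤ ℓ → ℓ ≤ n - z₂ → 1 ≤ k → k < z₂ - z₁ + ℓ →
    ⁅e (z₁ + k), e (z₂ + ℓ)⁆ =
      (∑ h ∈ Finset.Icc 2 (k + ℓ),
        P h (⁅e (z₁ + k - 1), e (z₂ + ℓ)⁆ + ⁅e (z₁ + k), e (z₂ + ℓ - 1)⁆) • e (h + 1))
      + β k ℓ • e 2)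

/-!
Choose `x` outside the finitely many proper subspaces `{y | ⁅y, C^k L⁆ ⊆ C^{k+2} L}`, so
that `ad x` induces isomorphisms `C^k L / C^{k+1} L → C^{k+1} L / C^{k+2} L` for `k ≥ 2`, and `u`
with `⁅x, u⁆ ∉ C³ L`, corrected by a multiple of `x` so that `⁅(ad x)^(n-3) u, u⁆ = 0`. Then
`x, (ad x)^(n-2) u, …, ad x u, u` is an adapted basis, so the triple hypothesis applies to it.

In an adapted basis `e`, `C^k L` is spanned by `e 2, …, e (n+1-k)` (these lie in it, and the
dimensions agree). The triple `(n-2, n-2, n)` and the Jacobi identity for `ad (e 1)` kill every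
bracket among `e 2, …, e (n-1)` except `⁅e (n-2), e (n-1)⁆`; that one lies in `C² L` and in the
kernel of `ad (e 1)`, hence is a multiple of `e 2`, nonzero because `z₂ = n - 2`. Bracketing the
spanning sets then computes every `⁅C^k L, C^ℓ L⁆`.
-/

open Submodule

variable {L}

lemma C_one : C L 1 = ⊤ := rfl

lemma C_succ {k : ℕ} (hk : 1 ≤ k) : C L (k + 1) = ⁅(⊤ : LieIdeal ℂ L), C L k⁆ := by
  obtain ⟨k, rfl⟩ := Nat.exists_eq_add_of_le' hk
  exact LieModule.lowerCentralSeries_succ ℂ L L k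

lemma C_antitone {a b : ℕ} (h : a ≤ b) : C L b ≤ C L a :=
  LieModule.antitone_lowerCentralSeries ℂ L L (Nat.sub_le_sub_right h 1)

lemma lie_mem_C_succ {k : ℕ} (hk : 1 ≤ k) (x : L) {y : L} (hy : y ∈ C L k) :
    ⁅x, y⁆ ∈ C L (k + 1) := by
  rw [C_succ hk]
  exact LieSubmodule.lie_mem_lie (LieSubmodule.mem_top x) hy

lemma iterate_toEnd_mem_C (x u : L) (m : ℕ) :
    (LieModule.toEnd ℂ L L x)^[m] u ∈ C L (m + 1) :=
  LieModule.iterate_toEnd_mem_lowerCentralSeries ℂ L L x u m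

lemma lie_mem_of_mem_span {S T : Set L} {M : Submodule ℂ L}
    (h : ∀ s ∈ S, ∀ t ∈ T, ⁅s, t⁆ ∈ M) {x y : L} (hx : x ∈ span ℂ S) (hy : y ∈ span ℂ T) :
    ⁅x, y⁆ ∈ M := by
  have := apply_mem_map₂ (LieModule.toEnd ℂ L L : L →ₗ[ℂ] Module.End ℂ L) hx hy
  rw [map₂_span_span] at this
  refine span_le.mpr ?_ this
  rintro _ ⟨s, hs, t, ht, rfl⟩
  exact h s hs t ht

lemma finrank_eq_one_of_toSubmodule_eq_span {I : LieIdeal ℂ L} {v : L} (hv : v ≠ 0)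
    (hI : I.toSubmodule = span ℂ {v}) : finrank ℂ I = 1 := by
  change finrank ℂ I.toSubmodule = 1
  rw [hI, finrank_span_singleton hv]

def lieTransporter (I J : LieIdeal ℂ L) : Submodule ℂ L where
  carrier := {x | ∀ y ∈ I, ⁅x, y⁆ ∈ J}
  add_mem' hx hy z hz := by
    rw [add_lie]
    exact add_mem (hx z hz) (hy z hz)
  zero_mem' z _ := by
    rw [zero_lie]
    exact zero_mem J
  smul_mem' c x hx z hz := by
    rw [smul_lie]
    exact J.smul_mem c (hx z hz)

lemma lie_iterate_toEnd_eq_zero {x z u : L} (hzx : ∀ w : L, ⁅⁅z, x⁆, w⁆ = 0) (hzu : ⁅z, u⁆ = 0)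
    (m : ℕ) : ⁅z, (LieModule.toEnd ℂ L L x)^[m] u⁆ = 0 := by
  induction m with
  | zero => exact hzu
  | succ m ih =>
    rw [Function.iterate_succ_apply', LieModule.toEnd_apply_apply, leibniz_lie, hzx, ih,
      lie_zero, add_zero]

namespace IsFiliform

variable {n : ℕ}

local notation "ad" x => LieModule.toEnd ℂ L L x

lemma finrank_C (hL : IsFiliform L n) {k : ℕ} (hk : 2 ≤ k) (hkn : k ≤ n) :
    finrank ℂ (C L k).toSubmodule = n - k :=
  hL.2.2.2 k hk hkn

lemma C_eq_bot (hL : IsFiliform L n) : C L n = ⊥ := by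
  have := hL.2.1
  rw [← LieSubmodule.toSubmodule_eq_bot, ← Submodule.finrank_eq_zero,
    hL.finrank_C hL.1 le_rfl, Nat.sub_self]

lemma not_C_le_C_succ (hL : IsFiliform L n) {k : ℕ} (hk : 1 ≤ k) (hkn : k < n) :
    ¬ C L k ≤ C L (k + 1) := by
  have := hL.2.1
  intro hle
  have hrk := Submodule.finrank_mono ((LieSubmodule.toSubmodule_le_toSubmodule _ _).mpr hle)
  rcases hk.eq_or_lt with rfl | hk
  · rw [C_one, LieSubmodule.top_toSubmodule, finrank_top, hL.2.2.1,
      hL.finrank_C le_rfl (by omega)] at hrk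
    omega
  · rw [hL.finrank_C hk hkn.le, hL.finrank_C (by omega) hkn] at hrk
    omega

lemma C_eq_sup_span (hL : IsFiliform L n) {k : ℕ} (hk : 2 ≤ k) (hkn : k < n) {y : L}
    (hy : y ∈ C L k) (hy' : y ∉ C L (k + 1)) :
    (C L k).toSubmodule = (C L (k + 1)).toSubmodule ⊔ span ℂ {y} := by
  have := hL.2.1
  refine (eq_of_le_of_finrank_eq (sup_le ?_ ?_) ?_).symm
  · exact (LieSubmodule.toSubmodule_le_toSubmodule _ _).mpr (C_antitone (by omega))
  · exact (span_singleton_le_iff_mem _ _).mpr hy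
  · rw [finrank_sup_span_singleton hy', hL.finrank_C (by omega) hkn, hL.finrank_C hk hkn.le]
    omega

lemma lieTransporter_ne_top (hL : IsFiliform L n) {k : ℕ} (hk : 1 ≤ k) (hkn : k + 2 ≤ n) :
    lieTransporter (C L k) (C L (k + 2)) ≠ ⊤ := by
  intro htop
  refine hL.not_C_le_C_succ (k := k + 1) (by omega) (by omega) ?_
  rw [C_succ hk, LieSubmodule.lie_le_iff]
  intro x _ y hy
  exact (htop ▸ mem_top : x ∈ lieTransporter (C L k) (C L (k + 2))) y hy

/-- Over the infinite field `ℂ`, finitely many proper subspaces do not cover `L`. -/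
lemma exists_forall_notMem_lieTransporter (hL : IsFiliform L n) :
    ∃ x : L, ∀ k, 1 ≤ k → k + 2 ≤ n → x ∉ lieTransporter (C L k) (C L (k + 2)) := by
  by_contra! hcover
  obtain ⟨⟨k, hk⟩, htop⟩ := Subspace.exists_eq_top_of_iUnion_eq_univ
    (p := fun k : Finset.Icc 1 (n - 2) => lieTransporter (C L k) (C L (k + 2))) <| by
      refine Set.eq_univ_of_forall fun x => ?_
      obtain ⟨k, hk, hkn, hx⟩ := hcover x
      exact Set.mem_iUnion.mpr ⟨⟨k, Finset.mem_Icc.mpr ⟨hk, by omega⟩⟩, hx⟩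
  rw [Finset.mem_Icc] at hk
  exact hL.lieTransporter_ne_top hk.1 (by omega) htop

lemma iterate_toEnd_notMem_C (hL : IsFiliform L n) {x u : L}
    (hx : ∀ k, 1 ≤ k → k + 2 ≤ n → x ∉ lieTransporter (C L k) (C L (k + 2)))
    (hu : ⁅x, u⁆ ∉ C L 3) {m : ℕ} (hm : 1 ≤ m) (hmn : m + 2 ≤ n) :
    (ad x)^[m] u ∉ C L (m + 2) := by
  induction m, hm using Nat.le_induction with
  | base => simpa using hu
  | succ m hm ih =>
    intro hmem
    refine hx (m + 1) (by omega) hmn fun c hc => ?_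
    rw [← LieSubmodule.mem_toSubmodule, hL.C_eq_sup_span (by omega) (by omega)
      (iterate_toEnd_mem_C x u m) (ih (by omega))] at hc
    obtain ⟨z, hz, w, hw, rfl⟩ := mem_sup.mp hc
    obtain ⟨t, rfl⟩ := mem_span_singleton.mp hw
    rw [lie_add, lie_smul]
    refine add_mem (lie_mem_C_succ (by omega) x hz) (smul_mem _ t ?_)
    rwa [Function.iterate_succ_apply'] at hmem

lemma C_le_span (hL : IsFiliform L n) {y : ℕ → L}
    (hy : ∀ j, 2 ≤ j → j < n → y j ∈ C L j ∧ y j ∉ C L (j + 1)) {j : ℕ} (hj : 2 ≤ j)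
    (hjn : j ≤ n) : (C L j).toSubmodule ≤ span ℂ (y '' Set.Icc j (n - 1)) := by
  induction hd : n - j generalizing j with
  | zero =>
    rw [show j = n by omega, hL.C_eq_bot]
    exact bot_le
  | succ d ih =>
    rw [hL.C_eq_sup_span hj (by omega) (hy j hj (by omega)).1 (hy j hj (by omega)).2]
    refine sup_le ((ih (by omega) (by omega) (by omega)).trans (span_mono ?_)) ?_
    · exact Set.image_mono (Set.Icc_subset_Icc_left (by omega))
    · exact (span_singleton_le_iff_mem _ _).mpr
        (subset_span (Set.mem_image_of_mem y (Set.mem_Icc.mpr ⟨le_rfl, by omega⟩)))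

lemma sup_span_sup_span_eq_top (hL : IsFiliform L n) {x u : L} (hu : ⁅x, u⁆ ∉ C L 3) :
    (C L 2).toSubmodule ⊔ span ℂ {x} ⊔ span ℂ {u} = ⊤ := by
  have := hL.2.1
  have hx : x ∉ C L 2 := fun hx => hu <| by
    rw [← lie_skew]
    exact neg_mem (lie_mem_C_succ (by omega) u hx)
  have hu' : u ∉ (C L 2).toSubmodule ⊔ span ℂ {x} := fun hu2 => hu <| by
    obtain ⟨c, hc, w, hw, rfl⟩ := mem_sup.mp hu2
    obtain ⟨t, rfl⟩ := mem_span_singleton.mp hw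
    rw [lie_add, lie_smul, lie_self, smul_zero, add_zero]
    exact lie_mem_C_succ (by omega) x hc
  refine eq_top_of_finrank_eq ?_
  rw [finrank_sup_span_singleton hu', finrank_sup_span_singleton hx,
    hL.finrank_C le_rfl (by have := hL.1; omega), hL.2.2.1]
  have := hL.1
  omega

lemma C_le_span_iterate_toEnd (hL : IsFiliform L n) {x u : L}
    (hx : ∀ k, 1 ≤ k → k + 2 ≤ n → x ∉ lieTransporter (C L k) (C L (k + 2)))
    (hu : ⁅x, u⁆ ∉ C L 3) {j : ℕ} (hj : 2 ≤ j) (hjn : j ≤ n) :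
    (C L j).toSubmodule ≤ span ℂ ((fun i => (ad x)^[i - 1] u) '' Set.Icc j (n - 1)) :=
  hL.C_le_span (fun i hi hin =>
    ⟨by simpa [show i - 1 + 1 = i by omega] using iterate_toEnd_mem_C x u (i - 1),
     by simpa [show i - 1 + 2 = i + 1 by omega] using
       hL.iterate_toEnd_notMem_C hx hu (m := i - 1) (by omega) (by omega)⟩) hj hjn

/-- Correcting `u` by a multiple of `x` does not change `(ad x)^[m] u` for `m ≥ 1`, and kills the
bracket `⁅(ad x)^[n-3] u, u⁆`, which a priori lies in the line `C L (n - 1)`. -/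
lemma exists_lie_iterate_toEnd_eq_zero (hL : IsFiliform L n) (hn : 4 ≤ n) {x : L}
    (hx : ∀ k, 1 ≤ k → k + 2 ≤ n → x ∉ lieTransporter (C L k) (C L (k + 2))) :
    ∃ u : L, ⁅x, u⁆ ∉ C L 3 ∧ ⁅(ad x)^[n - 3] u, u⁆ = 0 := by
  obtain ⟨u, -, hu⟩ : ∃ u ∈ C L 1, ⁅x, u⁆ ∉ C L 3 := by
    simpa [lieTransporter] using hx 1 le_rfl (by omega)
  have hline : (C L (n - 1)).toSubmodule ≤ span ℂ {(ad x)^[n - 2] u} := by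
    have := hL.C_le_span_iterate_toEnd hx hu (j := n - 1) (by omega) (by omega)
    rwa [Set.Icc_self, Set.image_singleton, show n - 1 - 1 = n - 2 by omega] at this
  have hmem : ⁅(ad x)^[n - 3] u, u⁆ ∈ C L (n - 1) := by
    rw [← lie_skew, show n - 1 = n - 3 + 1 + 1 by omega]
    exact neg_mem (lie_mem_C_succ (by omega) u (iterate_toEnd_mem_C x u (n - 3)))
  obtain ⟨c, hc⟩ := mem_span_singleton.mp (hline hmem)
  have hshift : ∀ m, (ad x)^[m + 1] (u + c • x) = (ad x)^[m + 1] u := fun m => by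
    simp only [Function.iterate_succ_apply, map_add, map_smul, LieModule.toEnd_apply_apply,
      lie_self, smul_zero, add_zero]
  refine ⟨u + c • x, by rwa [lie_add, lie_smul, lie_self, smul_zero, add_zero], ?_⟩
  obtain ⟨m, hm⟩ : ∃ m, n - 3 = m + 1 := ⟨n - 4, by omega⟩
  have hstep : (ad x)^[n - 2] u = ⁅x, (ad x)^[m + 1] u⁆ := by
    rw [show n - 2 = m + 1 + 1 by omega, Function.iterate_succ_apply']
    rfl
  rw [hm] at hc
  rw [hm, hshift, lie_add, lie_smul, ← lie_skew _ x, ← hstep, ← hc, smul_neg, add_neg_cancel]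

theorem exists_isAdaptedBasis (hL : IsFiliform L n) (hn : 4 ≤ n) :
    ∃ e : ℕ → L, IsAdaptedBasis L n e := by
  obtain ⟨x, hx⟩ := hL.exists_forall_notMem_lieTransporter
  obtain ⟨u, hu, hu3⟩ := hL.exists_lie_iterate_toEnd_eq_zero hn hx
  set E : ℕ → L := fun m => (ad x)^[m] u with hE
  have hcentral : ∀ w : L, ⁅E (n - 2), w⁆ = 0 := fun w => by
    have hw := lie_mem_C_succ (by omega) w (iterate_toEnd_mem_C x u (n - 2))
    rw [show n - 2 + 1 + 1 = n by omega, hL.C_eq_bot, LieSubmodule.mem_bot] at hw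
    rw [← lie_skew, hw, neg_zero]
  set e : ℕ → L := fun h => if h = 1 then x else E (n - h)
  have he1 : e 1 = x := if_pos rfl
  have heE : ∀ h, 2 ≤ h → e h = E (n - h) := fun h hh => if_neg (by omega)
  have hspan : ⊤ ≤ span ℂ (Set.range fun i : Fin n => e (i + 1)) := by
    rw [← hL.sup_span_sup_span_eq_top hu]
    refine sup_le (sup_le ((hL.C_le_span_iterate_toEnd hx hu le_rfl (by omega)).trans
      (span_mono ?_)) ?_) ?_
    · rintro _ ⟨j, hj, rfl⟩
      rw [Set.mem_Icc] at hj
      refine ⟨⟨n - j, by omega⟩, ?_⟩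
      simp only [heE (n - j + 1) (by omega), hE, show n - (n - j + 1) = j - 1 by omega]
    · exact (span_singleton_le_iff_mem _ _).mpr (subset_span ⟨⟨0, by omega⟩, he1⟩)
    · refine (span_singleton_le_iff_mem _ _).mpr (subset_span ⟨⟨n - 1, by omega⟩, ?_⟩)
      simp only [heE (n - 1 + 1) (by omega), hE, show n - (n - 1 + 1) = 0 by omega]
      rfl
  refine ⟨e, ⟨basisOfTopLeSpanOfCardEqFinrank _ hspan (by simp [hL.2.2.1]), fun i => by simp⟩,
    fun h h3 hhn => ?_, fun h _ _ => ?_, fun h h2 _ => ?_⟩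
  · rw [he1, heE h (by omega), heE (h - 1) (by omega), show n - (h - 1) = n - h + 1 by omega]
    exact (Function.iterate_succ_apply' _ _ u).symm
  · rw [heE 2 le_rfl]
    exact hcentral _
  · rw [heE 3 (by omega), heE h h2]
    refine lie_iterate_toEnd_eq_zero (fun w => ?_) hu3 _
    have hstep : ⁅x, E (n - 3)⁆ = E (n - 2) := by
      rw [show n - 2 = n - 3 + 1 by omega]
      exact (Function.iterate_succ_apply' _ _ u).symm
    show ⁅⁅E (n - 3), x⁆, w⁆ = 0
    rw [← lie_skew (E (n - 3)) x, hstep, neg_lie, hcentral, neg_zero]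

end IsFiliform

namespace IsAdaptedBasis

variable {n : ℕ} {e : ℕ → L}

lemma linearIndepOn (he : IsAdaptedBasis L n e) : LinearIndepOn ℂ e (Set.Icc 1 n) := by
  obtain ⟨b, hb⟩ := he.1
  have hrange : Set.range (fun i : Fin n => i.1 + 1) = Set.Icc 1 n := by
    ext h
    simp only [Set.mem_range, Set.mem_Icc]
    exact ⟨by rintro ⟨i, rfl⟩; omega, fun hh => ⟨⟨h - 1, by omega⟩, by simp; omega⟩⟩
  rw [← hrange, linearIndepOn_range_iff fun i j hij => Fin.ext (by simpa using hij)]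
  convert b.linearIndependent
  exact funext fun i => (hb i).symm

lemma notMem_span_image (he : IsAdaptedBasis L n e) {m : ℕ} (hm : 2 ≤ m) (hmn : m ≤ n) :
    e m ∉ span ℂ (e '' Set.Icc 2 (m - 1)) :=
  (he.linearIndepOn.mono (Set.Icc_subset_Icc (by omega) (by omega))).notMem_span_iff.mpr
    ⟨he.linearIndepOn.mono (Set.insert_subset (Set.mem_Icc.mpr ⟨by omega, hmn⟩)
      (Set.Icc_subset_Icc (by omega) (by omega))), by simp; omega⟩

lemma lie_one_mem_span (he : IsAdaptedBasis L n e) {m : ℕ} (hm : m ≤ n) {v : L}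
    (hv : v ∈ span ℂ (e '' Set.Icc 2 m)) : ⁅e 1, v⁆ ∈ span ℂ (e '' Set.Icc 2 (m - 1)) := by
  refine lie_mem_of_mem_span (S := {e 1}) ?_ (subset_span rfl) hv
  rintro _ rfl _ ⟨h, hh, rfl⟩
  rw [Set.mem_Icc] at hh
  rcases hh.1.eq_or_lt with rfl | h3
  · rw [← lie_skew, he.2.2.1 1 le_rfl (by omega), neg_zero]
    exact zero_mem _
  · rw [he.2.1 h h3 (by omega)]
    exact subset_span ⟨h - 1, ⟨by omega, by omega⟩, rfl⟩

lemma span_le_C (he : IsAdaptedBasis L n e) {k : ℕ} (hk : 1 ≤ k) :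
    span ℂ (e '' Set.Icc 2 (n + 1 - k)) ≤ (C L k).toSubmodule := by
  induction k, hk using Nat.le_induction with
  | base => exact le_top
  | succ k hk ih =>
    rw [span_le]
    rintro _ ⟨h, hh, rfl⟩
    rw [Set.mem_Icc] at hh
    have hbr := he.2.1 (h + 1) (by omega) (by omega)
    rw [Nat.add_sub_cancel] at hbr
    rw [SetLike.mem_coe, ← hbr]
    exact lie_mem_C_succ hk _ (ih (subset_span ⟨h + 1, ⟨by omega, by omega⟩, rfl⟩))

lemma finrank_span (he : IsAdaptedBasis L n e) {m : ℕ} (hm : m ≤ n) :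
    finrank ℂ (span ℂ (e '' Set.Icc 2 m)) = m - 1 := by
  rw [Set.image_eq_range,
    finrank_span_eq_card (he.linearIndepOn.mono (Set.Icc_subset_Icc (by omega) hm))]
  simp

lemma C_eq_span (he : IsAdaptedBasis L n e) (hL : IsFiliform L n) {k : ℕ} (hk : 2 ≤ k)
    (hkn : k ≤ n) : (C L k).toSubmodule = span ℂ (e '' Set.Icc 2 (n + 1 - k)) := by
  have := hL.2.1
  refine (eq_of_le_of_finrank_eq (he.span_le_C (by omega)) ?_).symm
  rw [he.finrank_span (by omega), hL.finrank_C hk hkn]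
  omega

lemma mem_span_two_of_lie_eq_zero (he : IsAdaptedBasis L n e) {m : ℕ} (hm : m ≤ n) {v : L}
    (hv : v ∈ span ℂ (e '' Set.Icc 2 m)) (hv1 : ⁅e 1, v⁆ = 0) : v ∈ span ℂ {e 2} := by
  induction m generalizing v with
  | zero =>
    obtain rfl : v = 0 := by simpa using hv
    exact zero_mem _
  | succ m ih =>
    rcases Nat.lt_or_ge m 2 with hm2 | hm2
    · refine span_mono ?_ hv
      rintro _ ⟨h, hh, rfl⟩
      rw [Set.mem_Icc] at hh
      rw [show h = 2 by omega]
      rfl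
    · rw [show Set.Icc 2 (m + 1) = insert (m + 1) (Set.Icc 2 m) by ext; simp; omega,
        Set.image_insert_eq] at hv
      obtain ⟨t, z, hz, rfl⟩ := mem_span_insert.mp hv
      rw [lie_add, lie_smul, he.2.1 (m + 1) (by omega) hm, Nat.add_sub_cancel] at hv1
      obtain rfl : t = 0 := by
        by_contra ht
        have hmem : t • e m ∈ span ℂ (e '' Set.Icc 2 (m - 1)) := by
          rw [eq_neg_of_add_eq_zero_left hv1]
          exact neg_mem (he.lie_one_mem_span (by omega) hz)
        exact he.notMem_span_image hm2 (by omega) ((smul_mem_iff _ ht).mp hmem)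
      rw [zero_smul, zero_add] at hv1 ⊢
      exact ih (by omega) hz hv1

lemma lie_one_lie (he : IsAdaptedBasis L n e) {i j : ℕ} (hi : 3 ≤ i) (hin : i ≤ n) (hj : 3 ≤ j)
    (hjn : j ≤ n) : ⁅e 1, ⁅e i, e j⁆⁆ = ⁅e (i - 1), e j⁆ + ⁅e i, e (j - 1)⁆ := by
  rw [leibniz_lie, he.2.1 i hi hin, he.2.1 j hj hjn]

lemma toSubmodule_lie_C_le (he : IsAdaptedBasis L n e) (hL : IsFiliform L n) {k l : ℕ}
    (hk : 2 ≤ k) (hkn : k ≤ n) (hl : 2 ≤ l) (hln : l ≤ n) {M : Submodule ℂ L}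
    (h : ∀ p q, 2 ≤ p → p + k ≤ n + 1 → 2 ≤ q → q + l ≤ n + 1 → ⁅e p, e q⁆ ∈ M) :
    (⁅C L k, C L l⁆ : LieIdeal ℂ L).toSubmodule ≤ M := by
  rw [LieSubmodule.lieIdeal_oper_eq_linear_span', span_le]
  rintro _ ⟨x, hx, y, hy, rfl⟩
  rw [← LieSubmodule.mem_toSubmodule, he.C_eq_span hL hk hkn] at hx
  rw [← LieSubmodule.mem_toSubmodule, he.C_eq_span hL hl hln] at hy
  refine lie_mem_of_mem_span ?_ hx hy
  rintro _ ⟨p, hp, rfl⟩ _ ⟨q, hq, rfl⟩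
  rw [Set.mem_Icc] at hp hq
  exact h p q hp.1 (by omega) hq.1 (by omega)

lemma lie_succ_eq_zero (he : IsAdaptedBasis L n e)
    (h₂ : IsLeast {k | 4 ≤ k ∧ ⁅e k, e (k + 1)⁆ ≠ 0} (n - 2)) {i : ℕ} (hi : 2 ≤ i)
    (hin : i + 3 ≤ n) : ⁅e i, e (i + 1)⁆ = 0 := by
  rcases (show i = 2 ∨ i = 3 ∨ 4 ≤ i by omega) with rfl | rfl | hi4
  · exact he.2.2.1 3 (by omega) (by omega)
  · exact he.2.2.2 4 (by omega) (by omega)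
  · by_contra hne
    have := h₂.2 ⟨hi4, hne⟩
    omega

lemma lie_eq_zero_of_le (he : IsAdaptedBasis L n e)
    (h₂ : IsLeast {k | 4 ≤ k ∧ ⁅e k, e (k + 1)⁆ ≠ 0} (n - 2)) {i j : ℕ} (hi : 2 ≤ i)
    (hij : i ≤ j) (hjn : j + 2 ≤ n) : ⁅e i, e j⁆ = 0 := by
  obtain ⟨d, hd⟩ : ∃ d, j - i = d := ⟨_, rfl⟩
  induction d using Nat.strong_induction_on generalizing i j with
  | _ d ih =>
    rcases (show d = 0 ∨ d = 1 ∨ 2 ≤ d by omega) with rfl | rfl | hd2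
    · rw [show j = i by omega, lie_self]
    · rw [show j = i + 1 by omega]
      exact he.lie_succ_eq_zero h₂ hi (by omega)
    · have hjac := he.lie_one_lie (i := i + 1) (j := j) (by omega) (by omega) (by omega) (by omega)
      rw [ih (d - 1) (by omega) (i := i + 1) (j := j) (by omega) (by omega) hjn (by omega),
        ih (d - 2) (by omega) (i := i + 1) (j := j - 1) (by omega) (by omega) (by omega)
          (by omega), lie_zero, Nat.add_sub_cancel, add_zero] at hjac
      exact hjac.symm

lemma lie_last_eq_zero (he : IsAdaptedBasis L n e)
    (h₁ : IsLeast {k | 4 ≤ k ∧ ⁅e k, e n⁆ ≠ 0} (n - 2)) {j : ℕ} (hj : 2 ≤ j)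
    (hjn : j + 3 ≤ n) : ⁅e j, e n⁆ = 0 := by
  rcases (show j = 2 ∨ j = 3 ∨ 4 ≤ j by omega) with rfl | rfl | hj4
  · exact he.2.2.1 n (by omega) le_rfl
  · exact he.2.2.2 n (by omega) le_rfl
  · by_contra hne
    have := h₁.2 ⟨hj4, hne⟩
    omega

lemma lie_sub_one_eq_zero (he : IsAdaptedBasis L n e)
    (h₁ : IsLeast {k | 4 ≤ k ∧ ⁅e k, e n⁆ ≠ 0} (n - 2)) {j : ℕ} (hj : 2 ≤ j)
    (hjn : j + 3 ≤ n) : ⁅e j, e (n - 1)⁆ = 0 := by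
  rcases hj.eq_or_lt with rfl | hj3
  · exact he.2.2.1 (n - 1) (by omega) (by omega)
  · have hjac := he.lie_one_lie (i := j) (j := n) hj3 (by omega) (by omega) le_rfl
    rw [he.lie_last_eq_zero h₁ hj hjn, he.lie_last_eq_zero h₁ (j := j - 1) (by omega) (by omega),
      lie_zero, zero_add] at hjac
    exact hjac.symm

/-- For `2 ≤ p, q ≤ n - 1`, the excluded case `p + q + 3 = 2 * n` is `{p, q} = {n - 2, n - 1}`. -/
lemma lie_eq_zero_of_add_ne (he : IsAdaptedBasis L n e)
    (h₁ : IsLeast {k | 4 ≤ k ∧ ⁅e k, e n⁆ ≠ 0} (n - 2))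
    (h₂ : IsLeast {k | 4 ≤ k ∧ ⁅e k, e (k + 1)⁆ ≠ 0} (n - 2)) {p q : ℕ} (hp : 2 ≤ p)
    (hpn : p + 1 ≤ n) (hq : 2 ≤ q) (hqn : q + 1 ≤ n) (hpq : p + q + 3 ≠ 2 * n) :
    ⁅e p, e q⁆ = 0 := by
  wlog hle : p ≤ q generalizing p q
  · rw [← lie_skew, this hq hqn hp hpn (by omega) (by omega), neg_zero]
  rcases (show q + 2 ≤ n ∨ q = p ∨ q = n - 1 ∧ p + 3 ≤ n by omega) with hq2 | rfl | ⟨rfl, hp3⟩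
  · exact he.lie_eq_zero_of_le h₂ hp hle hq2
  · exact lie_self _
  · exact he.lie_sub_one_eq_zero h₁ hp hp3

lemma exists_lie_eq_smul (he : IsAdaptedBasis L n e) (hL : IsFiliform L n)
    (h₁ : IsLeast {k | 4 ≤ k ∧ ⁅e k, e n⁆ ≠ 0} (n - 2))
    (h₂ : IsLeast {k | 4 ≤ k ∧ ⁅e k, e (k + 1)⁆ ≠ 0} (n - 2)) :
    ∃ α : ℂ, α ≠ 0 ∧ ⁅e (n - 2), e (n - 1)⁆ = α • e 2 := by
  have hn : 6 ≤ n := by have := h₂.1.1; omega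
  have hmem : ⁅e (n - 2), e (n - 1)⁆ ∈ span ℂ (e '' Set.Icc 2 (n + 1 - 2)) := by
    rw [← he.C_eq_span hL le_rfl (by omega)]
    exact lie_mem_C_succ le_rfl _ (LieSubmodule.mem_top _)
  have hker : ⁅e 1, ⁅e (n - 2), e (n - 1)⁆⁆ = 0 := by
    rw [he.lie_one_lie (by omega) (by omega) (by omega) (by omega),
      he.lie_sub_one_eq_zero h₁ (by omega) (by omega), show n - 1 - 1 = n - 2 by omega,
      lie_self, add_zero]
  obtain ⟨α, hα⟩ := mem_span_singleton.mp (he.mem_span_two_of_lie_eq_zero (by omega) hmem hker)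
  refine ⟨α, ?_, hα.symm⟩
  rintro rfl
  apply h₂.1.2
  rw [show n - 2 + 1 = n - 1 by omega, ← hα, zero_smul]
lemma toSubmodule_lie_C_two_two_le (he : IsAdaptedBasis L n e) (hL : IsFiliform L n)
    (h₁ : IsLeast {k | 4 ≤ k ∧ ⁅e k, e n⁆ ≠ 0} (n - 2))
    (h₂ : IsLeast {k | 4 ≤ k ∧ ⁅e k, e (k + 1)⁆ ≠ 0} (n - 2)) :
    (⁅C L 2, C L 2⁆ : LieIdeal ℂ L).toSubmodule ≤ span ℂ {e 2} := by
  obtain ⟨α, -, hα⟩ := he.exists_lie_eq_smul hL h₁ h₂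
  refine he.toSubmodule_lie_C_le hL le_rfl hL.1 le_rfl hL.1 fun p q hp hpn hq hqn => ?_
  by_cases hpq : p + q + 3 = 2 * n
  · rcases (show p = n - 2 ∧ q = n - 1 ∨ p = n - 1 ∧ q = n - 2 by omega) with
      ⟨rfl, rfl⟩ | ⟨rfl, rfl⟩
    · rw [hα]
      exact smul_mem _ α (mem_span_singleton_self _)
    · rw [← lie_skew, hα]
      exact neg_mem (smul_mem _ α (mem_span_singleton_self _))
  · rw [he.lie_eq_zero_of_add_ne h₁ h₂ hp (by omega) hq (by omega) hpq]
    exact zero_mem _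

lemma lie_C_eq_bot (he : IsAdaptedBasis L n e) (hL : IsFiliform L n)
    (h₁ : IsLeast {k | 4 ≤ k ∧ ⁅e k, e n⁆ ≠ 0} (n - 2))
    (h₂ : IsLeast {k | 4 ≤ k ∧ ⁅e k, e (k + 1)⁆ ≠ 0} (n - 2)) {k l : ℕ} (hk : 2 ≤ k)
    (hkn : k ≤ n) (hl : 2 ≤ l) (hln : l ≤ n) (hkl : 6 ≤ k + l) :
    ⁅C L k, C L l⁆ = ⊥ := by
  rw [← LieSubmodule.toSubmodule_eq_bot, ← le_bot_iff]
  refine he.toSubmodule_lie_C_le hL hk hkn hl hln fun p q hp hpn hq hqn => ?_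
  rw [he.lie_eq_zero_of_add_ne h₁ h₂ hp (by omega) hq (by omega) (by omega)]
  exact zero_mem _

end IsAdaptedBasis

/-- For a filiform Lie algebra with triple `(n-2, n-2, n)`, `n ≥ 6`:
`dim ⁅C², C²⁆ = dim ⁅C², C³⁆ = dim ⁅C³, C²⁆ = 1` and all other bracket ideals
`⁅C^k, C^ℓ⁆` with `k, ℓ ≥ 2` vanish (this computes the Hilbert polynomial). -/
theorem statement14 (n : ℕ) (hn : 6 ≤ n) (h : HasTriple L (n - 2) (n - 2) n) :
    finrank ℂ (⁅C L 2, C L 2⁆ : LieIdeal ℂ L) = 1 ∧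
    finrank ℂ (⁅C L 2, C L 3⁆ : LieIdeal ℂ L) = 1 ∧
    finrank ℂ (⁅C L 3, C L 2⁆ : LieIdeal ℂ L) = 1 ∧
    (∀ k ℓ, 2 ≤ k → 2 ≤ ℓ →
      ¬(k = 2 ∧ ℓ = 2) → ¬(k = 2 ∧ ℓ = 3) → ¬(k = 3 ∧ ℓ = 2) →
      (⁅C L k, C L ℓ⁆ : LieIdeal ℂ L) = ⊥) := by
  obtain ⟨hL, -, htriple⟩ := h
  obtain ⟨e, he⟩ := hL.exists_isAdaptedBasis (by omega)
  obtain ⟨h₁, h₂⟩ := htriple e he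
  obtain ⟨α, hα, hbr⟩ := he.exists_lie_eq_smul hL h₁ h₂
  have he₂ : e 2 ≠ 0 := he.linearIndepOn.ne_zero (Set.mem_Icc.mpr ⟨by omega, by omega⟩)
  have hlower : span ℂ {e 2} ≤ (⁅C L 3, C L 2⁆ : LieIdeal ℂ L).toSubmodule := by
    rw [span_singleton_le_iff_mem, ← inv_smul_smul₀ hα (e 2), ← hbr]
    refine smul_mem _ _ (LieSubmodule.lie_mem_lie ?_ ?_)
    · exact he.span_le_C (k := 3) (by omega) (subset_span ⟨n - 2, ⟨by omega, by omega⟩, rfl⟩)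
    · exact he.span_le_C (k := 2) (by omega) (subset_span ⟨n - 1, ⟨by omega, by omega⟩, rfl⟩)
  have hupper := he.toSubmodule_lie_C_two_two_le hL h₁ h₂
  have hmono : (⁅C L 3, C L 2⁆ : LieIdeal ℂ L).toSubmodule ≤ (⁅C L 2, C L 2⁆ : LieIdeal ℂ L) :=
    LieSubmodule.mono_lie (C_antitone (by omega)) le_rfl
  have h₂₂ := finrank_eq_one_of_toSubmodule_eq_span he₂ (hupper.antisymm (hlower.trans hmono))
  have h₃₂ := finrank_eq_one_of_toSubmodule_eq_span he₂ ((hmono.trans hupper).antisymm hlower)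
  refine ⟨h₂₂, LieSubmodule.lie_comm (C L 2) (C L 3) ▸ h₃₂, h₃₂, fun k l hk hl _ _ _ => ?_⟩
  refine le_bot_iff.mp ((LieSubmodule.mono_lie (C_antitone (min_le_left k 4))
    (C_antitone (min_le_left l 4))).trans (he.lie_C_eq_bot hL h₁ h₂ ?_ ?_ ?_ ?_ ?_).le) <;> omega
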